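/- For the function g(t) = (√π/2) erf(t) - t and ℓ = (1 - exp(-τ²))/2 with τ > 0, the inequality g(t₁ + τ + z) - g(t₁) + zℓ ≤ 0 holds for all t₁ ≥ 0 and z ≥ 0. -/
import Mathlib


open Real Set

/-- The error function `erf z = (2/√π) ∫₀^z exp(-s²) ds`. -/
noncomputable def erf (z : ℝ) : ℝ := (2 / Real.sqrt π) * ∫ s in (0:ℝ)..z, Real.exp (-s ^ 2)

/-- `g t = (√π/2) erf t - t`, so that `g' t = exp(-t²) - 1`. -/
noncomputable def g (t : ℝ) : ℝ := (Real.sqrt π / 2) * erf t - t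

lemma exp_int (a b : ℝ) : IntervalIntegrable (fun s : ℝ => Real.exp (-s ^ 2)) MeasureTheory.volume a b :=
  (Continuous.intervalIntegrable (by continuity) a b)

lemma g_eq (t : ℝ) : g t = ∫ s in (0:ℝ)..t, (Real.exp (-s ^ 2) - 1) := by
  have hπ : Real.sqrt π ≠ 0 := ne_of_gt (Real.sqrt_pos.mpr Real.pi_pos)
  rw [intervalIntegral.integral_sub (exp_int 0 t)
      (intervalIntegrable_const), intervalIntegral.integral_const]
  unfold g erf
  field_simp
  ring

lemma f_nonpos (s : ℝ) : Real.exp (-s ^ 2) - 1 ≤ 0 := by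
  have : Real.exp (-s ^ 2) ≤ 1 := Real.exp_le_one_iff.mpr (by nlinarith [sq_nonneg s])
  linarith

/-- For `ℓ = (1 - exp(-τ²))/2` with `τ > 0`:
`g(t₁ + τ + z) - g(t₁) + zℓ ≤ 0` for all `t₁ ≥ 0`, `z ≥ 0`. -/
theorem stmt1 (τ : ℝ) (hτ : 0 < τ) (t₁ z : ℝ) (ht₁ : 0 ≤ t₁) (hz : 0 ≤ z) :
    g (t₁ + τ + z) - g t₁ + z * ((1 - Real.exp (-τ ^ 2)) / 2) ≤ 0 := by
  have hint : ∀ a b : ℝ, IntervalIntegrable (fun s : ℝ => Real.exp (-s ^ 2) - 1)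
      MeasureTheory.volume a b := fun a b =>
    (exp_int a b).sub intervalIntegrable_const
  have key : g (t₁ + τ + z) - g t₁ =
      (∫ s in t₁..(t₁ + τ), (Real.exp (-s ^ 2) - 1)) +
      ∫ s in (t₁ + τ)..(t₁ + τ + z), (Real.exp (-s ^ 2) - 1) := by
    rw [g_eq, g_eq,
      intervalIntegral.integral_add_adjacent_intervals (hint _ _) (hint _ _),
      ← intervalIntegral.integral_add_adjacent_intervals (hint 0 t₁) (hint t₁ (t₁ + τ + z))]
    ring
  have h1 : (∫ s in t₁..(t₁ + τ), (Real.exp (-s ^ 2) - 1)) ≤ 0 := by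
    have := intervalIntegral.integral_mono_on (μ := MeasureTheory.volume)
      (f := fun s : ℝ => Real.exp (-s ^ 2) - 1) (g := fun _ : ℝ => (0:ℝ))
      (by linarith : t₁ ≤ t₁ + τ) (hint _ _) intervalIntegrable_const
      (fun s _ => f_nonpos s)
    simpa using this
  have h2 : (∫ s in (t₁ + τ)..(t₁ + τ + z), (Real.exp (-s ^ 2) - 1)) ≤
      z * (Real.exp (-τ ^ 2) - 1) := by
    have := intervalIntegral.integral_mono_on (μ := MeasureTheory.volume)
      (f := fun s : ℝ => Real.exp (-s ^ 2) - 1)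
      (g := fun _ : ℝ => Real.exp (-τ ^ 2) - 1)
      (by linarith : t₁ + τ ≤ t₁ + τ + z) (hint _ _) intervalIntegrable_const
      (fun s hs => by
        have hs1 : t₁ + τ ≤ s := hs.1
        have hτs : τ ≤ s := by linarith
        have : s ^ 2 ≥ τ ^ 2 := by nlinarith
        have h3 : Real.exp (-s ^ 2) ≤ Real.exp (-τ ^ 2) := Real.exp_le_exp.mpr (by linarith)
        show Real.exp (-s ^ 2) - 1 ≤ Real.exp (-τ ^ 2) - 1
        linarith)
    rw [intervalIntegral.integral_const] at this
    have hz' : t₁ + τ + z - (t₁ + τ) = z := by ring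
    rw [hz'] at this
    simpa [smul_eq_mul] using this
  have hτ2 : Real.exp (-τ ^ 2) ≤ 1 := Real.exp_le_one_iff.mpr (by nlinarith [sq_nonneg τ])
  nlinarith [key]
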